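/- Let n ∈ ℕ, let A : ℝ → ℝ^{n×n} be continuous with transition matrix Φ, and assume there are constants φ > 0 and α > 0 with ‖Φ(t,s)‖ ≤ φ·e^{−α(t−s)} for all t ≥ s. Let f : ℝ → ℝ^n be continuous with ‖f(t)‖ ≤ D for all t, fix t₀ ∈ ℝ, and let x : ℝ → ℝ^n be differentiable with x'(t) = A(t)·x(t) + f(t) for all t ≥ t₀. Then for all t ≥ t₀, ‖x(t)‖ ≤ φ·e^{−α(t−t₀)}·‖x(t₀)‖ + φ·D/α; in particular limsup_{t→∞} ‖x(t)‖ ≤ φ·D/α. -/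

import Mathlib

open Matrix MeasureTheory Filter

attribute [local instance] Matrix.frobeniusNormedAddCommGroup Matrix.frobeniusNormedSpace

/-- A transition matrix of a continuous matrix-valued map `A`. -/
structure IsTransitionMatrix {ι : Type*} [Fintype ι] [DecidableEq ι]
    (A : ℝ → Matrix ι ι ℝ) (Φ : ℝ → ℝ → Matrix ι ι ℝ) : Prop where
  refl : ∀ s, Φ s s = 1
  comp : ∀ t s r, Φ t s * Φ s r = Φ t r
  hasDerivAt_fst : ∀ s t, HasDerivAt (fun u => Φ u s) (A t * Φ t s) t
  hasDerivAt_snd : ∀ t s, HasDerivAt (fun u => Φ t u) (-(Φ t s * A s)) s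

/-- Euclidean norm on `Fin n → ℝ`. -/
noncomputable def euclNorm {n : ℕ} (v : Fin n → ℝ) : ℝ :=
  Real.sqrt (∑ i, (v i) ^ 2)

lemma euclNorm_nonneg {n : ℕ} (v : Fin n → ℝ) : 0 ≤ euclNorm v := Real.sqrt_nonneg _

noncomputable def toECLM {n : ℕ} : (Fin n → ℝ) →L[ℝ] EuclideanSpace ℝ (Fin n) :=
  (PiLp.continuousLinearEquiv 2 ℝ fun _ : Fin n => ℝ).symm.toContinuousLinearMap

lemma euclNorm_eq_norm {n : ℕ} (v : Fin n → ℝ) :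
    euclNorm v = ‖(toECLM v : EuclideanSpace ℝ (Fin n))‖ := by
  rw [show ‖(toECLM v : EuclideanSpace ℝ (Fin n))‖
      = ‖(WithLp.equiv 2 (Fin n → ℝ)).symm v‖ from rfl, EuclideanSpace.norm_eq]
  simp [euclNorm, sq_abs]

lemma euclNorm_mulVec_le {n : ℕ} (M : Matrix (Fin n) (Fin n) ℝ) (v : Fin n → ℝ) :
    euclNorm (M *ᵥ v) ≤ ‖M‖ * euclNorm v := by
  have h1 : euclNorm (M *ᵥ v) ^ 2 ≤ (∑ i, ∑ j, (M i j)^2) * (∑ j, (v j)^2) := by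
    rw [euclNorm, Real.sq_sqrt (by positivity), Finset.sum_mul]
    apply Finset.sum_le_sum
    intro i _
    calc (M *ᵥ v) i ^ 2 = (∑ j, M i j * v j)^2 := rfl
    _ ≤ (∑ j, (M i j)^2) * (∑ j, (v j)^2) := Finset.sum_mul_sq_le_sq_mul_sq _ _ _
  have hM : ‖M‖ = Real.sqrt (∑ i, ∑ j, (M i j)^2) := by
    rw [Matrix.frobenius_norm_def, Real.sqrt_eq_rpow]
    congr 1
    refine Finset.sum_congr rfl fun i _ => Finset.sum_congr rfl fun j _ => ?_
    rw [Real.norm_eq_abs, show ((2:ℝ)) = ((2:ℕ):ℝ) by norm_num, Real.rpow_natCast, sq_abs]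
  calc euclNorm (M *ᵥ v) = Real.sqrt (euclNorm (M *ᵥ v)^2) :=
        (Real.sqrt_sq (euclNorm_nonneg _)).symm
  _ ≤ Real.sqrt ((∑ i, ∑ j, (M i j)^2) * (∑ j, (v j)^2)) := Real.sqrt_le_sqrt h1
  _ = ‖M‖ * euclNorm v := by rw [Real.sqrt_mul (by positivity), hM, euclNorm]

noncomputable def mulVecCLM {n : ℕ} :
    Matrix (Fin n) (Fin n) ℝ →L[ℝ] ((Fin n → ℝ) →L[ℝ] (Fin n → ℝ)) :=
  LinearMap.toContinuousLinearMap
    { toFun := fun M => LinearMap.toContinuousLinearMap (Matrix.mulVecLin M)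
      map_add' := by intro M N; ext v i; simp [Matrix.add_mulVec]
      map_smul' := by intro c M; ext v i; simp [Matrix.smul_mulVec] }

lemma mulVecCLM_apply {n : ℕ} (M : Matrix (Fin n) (Fin n) ℝ) (v : Fin n → ℝ) :
    mulVecCLM M v = M *ᵥ v := rfl

lemma exp_decay_integral (α t₀ t : ℝ) (hα : 0 < α) :
    ∫ s in t₀..t, Real.exp (-α * (t - s)) = (1 - Real.exp (-α * (t - t₀))) / α := by
  have hder : ∀ s ∈ Set.uIcc t₀ t,
      HasDerivAt (fun u => Real.exp (-α * (t - u)) / α) (Real.exp (-α * (t - s))) s := by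
    intro s _
    have h1 : HasDerivAt (fun u : ℝ => -α * (t - u)) α s := by
      simpa using ((hasDerivAt_id s).const_sub t).const_mul (-α)
    have := (h1.exp).div_const α
    convert this using 1
    · rfl
    · rfl
    field_simp
  have hcont : Continuous fun s => Real.exp (-α * (t - s)) := by continuity
  rw [intervalIntegral.integral_eq_sub_of_hasDerivAt hder (hcont.intervalIntegrable _ _)]
  simp [sub_div]

/-- ISS-type estimate: if the transition matrix of `A` decays like
`φ·e^{−α(t−s)}` and `‖f(t)‖ ≤ D`, then any solution of `x' = A·x + f` satisfies
`‖x(t)‖ ≤ φ·e^{−α(t−t₀)}·‖x(t₀)‖ + φ·D/α` for `t ≥ t₀`; in particular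
`limsup_{t→∞} ‖x(t)‖ ≤ φ·D/α`. -/
theorem iss_estimate_forced_linear_system {n : ℕ}
    (A : ℝ → Matrix (Fin n) (Fin n) ℝ) (hA : Continuous A)
    (Φ : ℝ → ℝ → Matrix (Fin n) (Fin n) ℝ) (hΦ : IsTransitionMatrix A Φ)
    (φ α : ℝ) (hφ : 0 < φ) (hα : 0 < α)
    (hdecay : ∀ t s, s ≤ t → ‖Φ t s‖ ≤ φ * Real.exp (-α * (t - s)))
    (f : ℝ → Fin n → ℝ) (hf : Continuous f)
    (D : ℝ) (hD : ∀ t, euclNorm (f t) ≤ D)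
    (t₀ : ℝ)
    (x : ℝ → Fin n → ℝ) (hx : Differentiable ℝ x)
    (hode : ∀ t, t₀ ≤ t → deriv x t = A t *ᵥ x t + f t) :
    (∀ t, t₀ ≤ t →
      euclNorm (x t) ≤ φ * Real.exp (-α * (t - t₀)) * euclNorm (x t₀) + φ * D / α) ∧
    limsup (fun t => euclNorm (x t)) atTop ≤ φ * D / α := by
  have hD0 : 0 ≤ D := le_trans (euclNorm_nonneg (f t₀)) (hD t₀)
  have key : ∀ t, t₀ ≤ t →
      euclNorm (x t) ≤ φ * Real.exp (-α * (t - t₀)) * euclNorm (x t₀) + φ * D / α := by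
    intro t ht
    have hΦcont : Continuous fun s => Φ t s := by
      have hd : Differentiable ℝ fun s => Φ t s :=
        fun s => (hΦ.hasDerivAt_snd t s).differentiableAt
      exact hd.continuous
    set g : ℝ → Fin n → ℝ := fun s => Φ t s *ᵥ f s with hg_def
    have hgcont : Continuous g := hΦcont.matrix_mulVec hf
    have hder : ∀ s ∈ Set.uIcc t₀ t, HasDerivAt (fun u => Φ t u *ᵥ x u) (g s) s := by
      intro s hs
      have hs' : t₀ ≤ s := by
        rw [Set.uIcc_of_le ht] at hs; exact hs.1
      have h1 : HasDerivAt (fun u => mulVecCLM (Φ t u)) (mulVecCLM (-(Φ t s * A s))) s :=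
        mulVecCLM.hasFDerivAt.comp_hasDerivAt s (hΦ.hasDerivAt_snd t s)
      have h2 : HasDerivAt x (deriv x s) s := (hx s).hasDerivAt
      have h3 := h1.clm_apply h2
      simp only [mulVecCLM_apply, ContinuousLinearMap.add_apply] at h3
      convert h3 using 1
      · rfl
      · rfl
      · rfl
      rw [hode s hs']
      simp [hg_def, Matrix.mulVec_add, Matrix.neg_mulVec, Matrix.mulVec_mulVec]
    have hFTC : ∫ s in t₀..t, g s = x t - Φ t t₀ *ᵥ x t₀ := by
      rw [intervalIntegral.integral_eq_sub_of_hasDerivAt hder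
        (hgcont.intervalIntegrable _ _)]
      rw [hΦ.refl t, Matrix.one_mulVec]
    have hxt : x t = Φ t t₀ *ᵥ x t₀ + ∫ s in t₀..t, g s := by
      rw [hFTC]; abel
    -- norm estimate
    have hbound_cont : Continuous fun s => φ * D * Real.exp (-α * (t - s)) := by
      continuity
    have hIineq : ‖∫ s in t₀..t, (toECLM (g s) : EuclideanSpace ℝ (Fin n))‖
        ≤ |∫ s in t₀..t, φ * D * Real.exp (-α * (t - s))| := by
      apply intervalIntegral.norm_integral_le_abs_of_norm_le
      · refine (ae_restrict_iff' measurableSet_uIoc).2 (Eventually.of_forall fun s hs => ?_)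
        have hs' : s ≤ t := by
          rw [Set.uIoc_of_le ht] at hs; exact hs.2
        rw [← euclNorm_eq_norm]
        calc euclNorm (g s) ≤ ‖Φ t s‖ * euclNorm (f s) := euclNorm_mulVec_le _ _
        _ ≤ (φ * Real.exp (-α * (t - s))) * D := by
            apply mul_le_mul (hdecay t s hs') (hD s) (euclNorm_nonneg _)
            positivity
        _ = φ * D * Real.exp (-α * (t - s)) := by ring
      · exact hbound_cont.intervalIntegrable _ _
    have hIeq : (toECLM (∫ s in t₀..t, g s) : EuclideanSpace ℝ (Fin n))
        = ∫ s in t₀..t, (toECLM (g s) : EuclideanSpace ℝ (Fin n)) :=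
      (toECLM.intervalIntegral_comp_comm (hgcont.intervalIntegrable _ _)).symm
    have hIval : ∫ s in t₀..t, φ * D * Real.exp (-α * (t - s))
        = φ * D * ((1 - Real.exp (-α * (t - t₀))) / α) := by
      rw [intervalIntegral.integral_const_mul, exp_decay_integral α t₀ t hα]
    have hIle : |∫ s in t₀..t, φ * D * Real.exp (-α * (t - s))| ≤ φ * D / α := by
      have he : (0:ℝ) ≤ Real.exp (-α * (t - t₀)) := (Real.exp_pos _).le
      have hle1 : Real.exp (-α * (t - t₀)) ≤ 1 := Real.exp_le_one_iff.2 (by nlinarith)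
      rw [hIval, abs_of_nonneg]
      · calc φ * D * ((1 - Real.exp (-α * (t - t₀))) / α) ≤ φ * D * (1 / α) := by
              gcongr
              linarith
        _ = φ * D / α := by ring
      · have h1e : 0 ≤ 1 - Real.exp (-α * (t - t₀)) := by linarith
        positivity
    calc euclNorm (x t) = ‖(toECLM (x t) : EuclideanSpace ℝ (Fin n))‖ := euclNorm_eq_norm _
    _ = ‖(toECLM (Φ t t₀ *ᵥ x t₀) : EuclideanSpace ℝ (Fin n))
          + (toECLM (∫ s in t₀..t, g s) : EuclideanSpace ℝ (Fin n))‖ := by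
        rw [hxt, map_add]
    _ ≤ ‖(toECLM (Φ t t₀ *ᵥ x t₀) : EuclideanSpace ℝ (Fin n))‖
          + ‖(toECLM (∫ s in t₀..t, g s) : EuclideanSpace ℝ (Fin n))‖ := norm_add_le _ _
    _ ≤ φ * Real.exp (-α * (t - t₀)) * euclNorm (x t₀) + φ * D / α := by
        apply add_le_add
        · rw [← euclNorm_eq_norm]
          calc euclNorm (Φ t t₀ *ᵥ x t₀) ≤ ‖Φ t t₀‖ * euclNorm (x t₀) :=
                euclNorm_mulVec_le _ _
          _ ≤ φ * Real.exp (-α * (t - t₀)) * euclNorm (x t₀) :=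
                mul_le_mul_of_nonneg_right (hdecay t t₀ ht) (euclNorm_nonneg _)
        · rw [hIeq]
          exact hIineq.trans hIle
  refine ⟨key, ?_⟩
  -- limsup part
  have hexp : Tendsto (fun t => Real.exp (-α * (t - t₀))) atTop (nhds 0) := by
    apply Real.tendsto_exp_atBot.comp
    have h1 : Tendsto (fun t : ℝ => α * (t - t₀)) atTop atTop :=
      (tendsto_atTop_add_const_right atTop (-t₀) tendsto_id).const_mul_atTop hα
    have := tendsto_neg_atTop_atBot.comp h1
    refine this.congr fun t => ?_
    simp [neg_mul]
  have hb : Tendsto (fun t => φ * Real.exp (-α * (t - t₀)) * euclNorm (x t₀) + φ * D / α)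
      atTop (nhds (φ * D / α)) := by
    have := ((hexp.const_mul φ).mul_const (euclNorm (x t₀))).add_const (φ * D / α)
    simpa using this
  have h2 : IsCoboundedUnder (· ≤ ·) atTop (fun t => euclNorm (x t)) := by
    apply Filter.IsBoundedUnder.isCoboundedUnder_le (α := ℝ)
    exact Filter.isBoundedUnder_of ⟨0, fun t => euclNorm_nonneg _⟩
  calc limsup (fun t => euclNorm (x t)) atTop
      ≤ limsup (fun t => φ * Real.exp (-α * (t - t₀)) * euclNorm (x t₀) + φ * D / α) atTop :=
        limsup_le_limsup (eventually_atTop.2 ⟨t₀, key⟩) h2 hb.isBoundedUnder_le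
  _ = φ * D / α := hb.limsup_eq
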